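/- Let (X,p) be a 0-complete partial metric space and let A_1, …, A_k be nonempty sequentially closed subsets of X with X = A_1 ∪ … ∪ A_k. Suppose T : X → X satisfies (1) T(A_i) ⊆ A_{i+1} for 1 ≤ i ≤ k (where A_{k+1} = A_1), and (2) there exists α ∈ (0,1) such that p(Tx,Ty) ≤ α·p(x,y) for all x ∈ A_i and y ∈ A_{i+1}, 1 ≤ i ≤ k. Then T has a unique fixed point, and this fixed point lies in the intersection A_1 ∩ … ∩ A_k (in particular this intersection is nonempty). -/

import Mathlib

open Filter Topology

/-- A partial metric on a type `X`. -/
structure IsPartialMetric {X : Type*} (p : X → X → ℝ) : Prop where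
  nonneg : ∀ x y, 0 ≤ p x y
  symm : ∀ x y, p x y = p y x
  eq_of : ∀ x y, p x x = p x y → p x y = p y y → x = y
  self_le : ∀ x y, p x x ≤ p x y
  triangle : ∀ x y z, p x z + p y y ≤ p x y + p y z

/-- A sequence `x` converges to `a` in the partial metric `p`:
`lim_{n→∞} p(a, x n) = p(a,a)`. -/
def PConverges {X : Type*} (p : X → X → ℝ) (x : ℕ → X) (a : X) : Prop :=
  Tendsto (fun n => p a (x n)) atTop (𝓝 (p a a))

/-- A sequence is `0`-Cauchy: `lim_{m,n→∞} p(x n, x m) = 0`. -/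
def PZeroCauchy {X : Type*} (p : X → X → ℝ) (x : ℕ → X) : Prop :=
  Tendsto (fun mn : ℕ × ℕ => p (x mn.1) (x mn.2)) atTop (𝓝 0)

/-- `(X,p)` is `0`-complete. -/
def PZeroComplete {X : Type*} (p : X → X → ℝ) : Prop :=
  ∀ x : ℕ → X, PZeroCauchy p x → ∃ a, PConverges p x a ∧ p a a = 0

/-- A set is sequentially closed with respect to `p`-convergence. -/
def SeqClosed {X : Type*} (p : X → X → ℝ) (A : Set X) : Prop :=
  ∀ (x : ℕ → X) (a : X), (∀ n, x n ∈ A) → PConverges p x a → a ∈ A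

/-- A sequence is Cauchy in `(X,p)`: the double limit `lim_{m,n→∞} p(x n, x m)`
exists (finite). -/
def PCauchy {X : Type*} (p : X → X → ℝ) (x : ℕ → X) : Prop :=
  ∃ L : ℝ, Tendsto (fun mn : ℕ × ℕ => p (x mn.1) (x mn.2)) atTop (𝓝 L)

/-- `(X,p)` is complete: every Cauchy sequence converges to some `a` with
`p(a,a) = lim_{m,n→∞} p(x n, x m)`. -/
def PComplete {X : Type*} (p : X → X → ℝ) : Prop :=
  ∀ x : ℕ → X, PCauchy p x → ∃ a, PConverges p x a ∧
    Tendsto (fun mn : ℕ × ℕ => p (x mn.1) (x mn.2)) atTop (𝓝 (p a a))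

/-- Continuity of `T : X → X` with respect to the open `p`-balls. -/
def PMContinuous {X : Type*} (p : X → X → ℝ) (T : X → X) : Prop :=
  ∀ x₀ : X, ∀ ε > (0:ℝ), ∃ δ > (0:ℝ), ∀ y,
    p x₀ y < p x₀ x₀ + δ → p (T x₀) (T y) < p (T x₀) (T x₀) + ε

/-- A set `A` is `0`-compact: every sequence in `A` has a subsequence converging
to some `a ∈ A` with `lim_{n→∞} p(x (k n), a) = p(a,a) = 0`. -/
def PZeroCompact {X : Type*} (p : X → X → ℝ) (A : Set X) : Prop :=
  ∀ x : ℕ → X, (∀ n, x n ∈ A) → ∃ (k : ℕ → ℕ) (a : X), StrictMono k ∧ a ∈ A ∧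
    Tendsto (fun n => p (x (k n)) a) atTop (𝓝 (p a a)) ∧ p a a = 0

/-! The Picard orbit of a point of `A 0` visits `A 0, A 1, …` cyclically, so consecutive orbit
points lie in consecutive sets and the contraction makes the steps `p(xₙ, xₙ₊₁)` decay
geometrically; the orbit is therefore `0`-Cauchy. Its limit `a` satisfies `p(a,a) = 0` and lies
in every `A i`, because each set is visited infinitely often and is sequentially closed. Then
`p(Ta, xₙ₊₁) ≤ α p(a, xₙ) → 0` forces `Ta = a`, and any fixed point `w ∈ A j` satisfies
`p(a, w) ≤ α p(a, w)` because `a ∈ A (j - 1)`. -/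

open Fin.NatCast

namespace IsPartialMetric

variable {X : Type*} {p : X → X → ℝ}

theorem eq_of_eq_zero (hp : IsPartialMetric p) {x y : X} (h : p x y = 0) : x = y := by
  have hxx : p x x = 0 := le_antisymm (h ▸ hp.self_le x y) (hp.nonneg x x)
  have hyy : p y y = 0 := by
    linarith [hp.self_le y x, hp.symm x y, hp.nonneg y y]
  exact hp.eq_of x y (by rw [hxx, h]) (by rw [h, hyy])

theorem eq_of_le_mul (hp : IsPartialMetric p) {x y : X} {α : ℝ} (hα : α < 1)
    (h : p x y ≤ α * p x y) : x = y :=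
  hp.eq_of_eq_zero <| le_antisymm (by nlinarith [hp.nonneg x y]) (hp.nonneg x y)

theorem eq_of_tendsto_zero (hp : IsPartialMetric p) {x : ℕ → X} {a b : X}
    (ha : Tendsto (fun n => p a (x n)) atTop (𝓝 0))
    (hb : Tendsto (fun n => p b (x n)) atTop (𝓝 0)) : a = b := by
  have hle : ∀ n, p a b ≤ p a (x n) + p b (x n) := fun n => by
    linarith [hp.triangle a (x n) b, hp.symm (x n) b, hp.nonneg (x n) (x n)]
  have hab : p a b ≤ 0 := by
    simpa using ge_of_tendsto (ha.add hb) (Eventually.of_forall hle)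
  exact hp.eq_of_eq_zero (le_antisymm hab (hp.nonneg a b))

theorem le_pow_mul_of_le_geometric (hp : IsPartialMetric p) {x : ℕ → X} {α d : ℝ}
    (hα₀ : 0 ≤ α) (hα₁ : α < 1) (hx : ∀ n, p (x n) (x (n + 1)) ≤ α ^ n * d) (m l : ℕ) :
    p (x m) (x (m + l)) ≤ α ^ m * (d / (1 - α)) := by
  have hd : 0 ≤ d := by simpa using (hp.nonneg _ _).trans (hx 0)
  have hC : d + α * (d / (1 - α)) = d / (1 - α) := by
    field_simp [(sub_pos.2 hα₁).ne']
    ring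
  have hdC : d ≤ d / (1 - α) := by nlinarith [div_nonneg hd (sub_pos.2 hα₁).le]
  induction l generalizing m with
  | zero =>
    calc p (x m) (x (m + 0)) ≤ p (x m) (x (m + 1)) := hp.self_le _ _
      _ ≤ α ^ m * d := hx m
      _ ≤ α ^ m * (d / (1 - α)) := by gcongr
  | succ l ih =>
    calc p (x m) (x (m + (l + 1)))
        ≤ p (x m) (x (m + 1)) + p (x (m + 1)) (x (m + 1 + l)) := by
          rw [← add_comm 1 l, ← add_assoc]
          linarith [hp.triangle (x m) (x (m + 1)) (x (m + 1 + l)),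
            hp.nonneg (x (m + 1)) (x (m + 1))]
      _ ≤ α ^ m * d + α ^ (m + 1) * (d / (1 - α)) := add_le_add (hx m) (ih (m + 1))
      _ = α ^ m * (d / (1 - α)) := by rw [pow_succ, mul_assoc, ← mul_add, hC]

theorem pZeroCauchy_of_le_geometric (hp : IsPartialMetric p) {x : ℕ → X} {α d : ℝ}
    (hα₀ : 0 ≤ α) (hα₁ : α < 1) (hx : ∀ n, p (x n) (x (n + 1)) ≤ α ^ n * d) :
    PZeroCauchy p x := by
  have hbound : ∀ m n, p (x m) (x n) ≤ α ^ min m n * (d / (1 - α)) := fun m n => by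
    rcases le_total m n with h | h
    · obtain ⟨l, rfl⟩ := Nat.exists_eq_add_of_le h
      simpa using hp.le_pow_mul_of_le_geometric hα₀ hα₁ hx m l
    · obtain ⟨l, rfl⟩ := Nat.exists_eq_add_of_le h
      simpa [hp.symm (x (n + l))] using hp.le_pow_mul_of_le_geometric hα₀ hα₁ hx n l
  have hmin : Tendsto (fun mn : ℕ × ℕ => min mn.1 mn.2) atTop atTop :=
    tendsto_atTop_atTop.2 fun b => ⟨(b, b), fun mn h => le_min h.1 h.2⟩
  have hlim := ((tendsto_pow_atTop_nhds_zero_of_lt_one hα₀ hα₁).comp hmin).mul_const (d / (1 - α))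
  rw [zero_mul] at hlim
  exact squeeze_zero (fun _ => hp.nonneg _ _) (fun mn => hbound mn.1 mn.2) hlim

theorem pZeroCauchy_of_contracting (hp : IsPartialMetric p) {x : ℕ → X} {α : ℝ}
    (hα₀ : 0 ≤ α) (hα₁ : α < 1)
    (hx : ∀ n, p (x (n + 1)) (x (n + 2)) ≤ α * p (x n) (x (n + 1))) : PZeroCauchy p x :=
  hp.pZeroCauchy_of_le_geometric hα₀ hα₁ fun n =>
    le_geom (u := fun n => p (x n) (x (n + 1))) hα₀ n fun k _ => hx k

end IsPartialMetric

theorem SeqClosed.mem_of_frequently {X : Type*} {p : X → X → ℝ} {A : Set X} {x : ℕ → X}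
    {a : X} (hA : SeqClosed p A) (hx : PConverges p x a) (hfreq : ∃ᶠ n in atTop, x n ∈ A) :
    a ∈ A := by
  obtain ⟨φ, hφ, hφA⟩ := extraction_of_frequently_atTop hfreq
  exact hA (x ∘ φ) a hφA (hx.comp hφ.tendsto_atTop)

theorem Fin.frequently_natCast_eq {k : ℕ} [NeZero k] (i : Fin k) :
    ∃ᶠ n : ℕ in atTop, (n : Fin k) = i :=
  frequently_atTop.2 fun a => ⟨(i : ℕ) + a * k, by nlinarith [NeZero.one_le (n := k)], by
    ext; simp only [Fin.val_natCast, Nat.add_mul_mod_self_right, Nat.mod_eq_of_lt i.isLt]⟩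

theorem iterate_mem_of_mapsTo_succ {X : Type*} {k : ℕ} [NeZero k] {A : Fin k → Set X}
    {T : X → X} (hT : ∀ i : Fin k, ∀ x ∈ A i, T x ∈ A (i + 1)) {x : X} (hx : x ∈ A 0) :
    ∀ n : ℕ, T^[n] x ∈ A n
  | 0 => by simpa using hx
  | n + 1 => by
    rw [Function.iterate_succ_apply', Nat.cast_succ]
    exact hT _ _ (iterate_mem_of_mapsTo_succ hT hx n)

/-- cyclical Banach contraction principle for `k` sets. -/
theorem cyclic_contraction_k_sets {X : Type*} (p : X → X → ℝ)
    (hp : IsPartialMetric p) (hcomp : PZeroComplete p)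
    (k : ℕ) [NeZero k] (A : Fin k → Set X)
    (hne : ∀ i, (A i).Nonempty) (hcl : ∀ i, SeqClosed p (A i))
    (hX : (⋃ i, A i) = Set.univ)
    (T : X → X) (hT : ∀ i : Fin k, ∀ x ∈ A i, T x ∈ A (i + 1))
    (α : ℝ) (hα : α ∈ Set.Ioo (0:ℝ) 1)
    (hcontr : ∀ i : Fin k, ∀ x ∈ A i, ∀ y ∈ A (i + 1), p (T x) (T y) ≤ α * p x y) :
    ∃ z, T z = z ∧ (∀ i, z ∈ A i) ∧ ∀ w, T w = w → w = z := by
  obtain ⟨hα₀, hα₁⟩ := hα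
  obtain ⟨x₀, hx₀⟩ := hne 0
  set x : ℕ → X := fun n => T^[n] x₀
  have hxA : ∀ n : ℕ, x n ∈ A n := iterate_mem_of_mapsTo_succ hT hx₀
  have hxT : ∀ n, x (n + 1) = T (x n) := fun n => Function.iterate_succ_apply' T n x₀
  have hstep : ∀ n, p (x (n + 1)) (x (n + 2)) ≤ α * p (x n) (x (n + 1)) := fun n => by
    rw [hxT (n + 1), hxT n]
    exact hcontr n _ (hxA n) _ (hT n _ (hxA n))
  obtain ⟨a, hconv, haa⟩ := hcomp x (hp.pZeroCauchy_of_contracting hα₀.le hα₁ hstep)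
  have haA : ∀ i, a ∈ A i := fun i =>
    (hcl i).mem_of_frequently hconv ((Fin.frequently_natCast_eq i).mono fun n hn => hn ▸ hxA n)
  have hlim : Tendsto (fun n => p a (x n)) atTop (𝓝 0) := haa ▸ hconv
  have hTa : T a = a := by
    refine hp.eq_of_tendsto_zero (x := fun n => x (n + 1)) ?_ (hlim.comp (tendsto_add_atTop_nat 1))
    refine squeeze_zero (fun _ => hp.nonneg _ _) (fun n => ?_) (by simpa using hlim.const_mul α)
    rw [hxT]
    exact hcontr (n - 1) a (haA _) (x n) (by rw [sub_add_cancel]; exact hxA n)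
  refine ⟨a, hTa, haA, fun w hw => ?_⟩
  obtain ⟨j, hj⟩ := Set.mem_iUnion.1 (hX ▸ Set.mem_univ w)
  have haw := hcontr (j - 1) a (haA _) w (by rwa [sub_add_cancel])
  rw [hTa, hw] at haw
  exact (hp.eq_of_le_mul hα₁ haw).symm
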